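/- Let f be a holomorphic function on the open unit disk 𝔻 ⊆ ℂ with |Re f(z)| < 1 for all z ∈ 𝔻. Then for all z, w ∈ 𝔻, |log((1 + Re f(z))/(1 − Re f(z))) − log((1 + Re f(w))/(1 − Re f(w)))| ≤ (4/π)·σ(z, w); that is, the real part of f is (4/π)-Lipschitz from the hyperbolic distance on 𝔻 to the hyperbolic distance on the interval (−1,1) induced by the weight 2/(1 − t²). -/

import Mathlib

open Real

/-- The pseudo-hyperbolic distance on the unit disk. -/
noncomputable def pseudoHypDist (z w : ℂ) : ℝ :=
  ‖z - w‖ / ‖1 - (starRingEnd ℂ) z * w‖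

/-- The hyperbolic distance on the unit disk (curvature −1, density 2/(1−|z|²)). -/
noncomputable def hypDist (z w : ℂ) : ℝ :=
  Real.log ((1 + pseudoHypDist z w) / (1 - pseudoHypDist z w))

/-!
Write `G = exp (i π f / 2)`: since `|Re f| < 1`, `G` takes values in the right half-plane, and
the Cayley transform of `G` is a holomorphic self-map of the disk. Schwarz–Pick for it reads
`|f'(z)| (1 - |z|²) ≤ (4 / π) cos (π Re f(z) / 2)`, and `cos (π x / 2) ≤ 1 - x²` on `[-1, 1]`.
So `Re f` stretches the density `2 / (1 - |z|²)` of the disk by at most `4 / π` when its values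
are measured with the density `2 / (1 - t²)` on `(-1, 1)`. A disk automorphism moves the
geodesic from `w` to `z` onto the segment `[0, ρ(z, w)]`, along which this pointwise bound
integrates to the claim.
-/

open Metric Set ComplexConjugate

noncomputable def diskAut (a ζ : ℂ) : ℂ := (ζ + a) / (1 + conj a * ζ)

section DiskAut

variable {a ζ : ℂ}

lemma one_add_conj_mul_ne_zero (ha : ‖a‖ < 1) (hζ : ‖ζ‖ < 1) : 1 + conj a * ζ ≠ 0 := by
  intro h
  have hlt : ‖conj a * ζ‖ < 1 := by
    rw [norm_mul, Complex.norm_conj]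
    exact mul_lt_one_of_nonneg_of_lt_one_left (norm_nonneg a) ha hζ.le
  rw [eq_neg_of_add_eq_zero_right h, norm_neg, norm_one] at hlt
  exact hlt.false

lemma sq_norm_one_add_conj_mul_sub_sq_norm_add (a ζ : ℂ) :
    ‖1 + conj a * ζ‖ ^ 2 - ‖ζ + a‖ ^ 2 = (1 - ‖a‖ ^ 2) * (1 - ‖ζ‖ ^ 2) := by
  simp only [Complex.sq_norm, Complex.normSq_apply, Complex.add_re, Complex.add_im,
    Complex.mul_re, Complex.mul_im, Complex.one_re, Complex.one_im, Complex.conj_re,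
    Complex.conj_im]
  ring

lemma norm_diskAut_lt_one (ha : ‖a‖ < 1) (hζ : ‖ζ‖ < 1) : ‖diskAut a ζ‖ < 1 := by
  have hden := norm_pos_iff.2 (one_add_conj_mul_ne_zero ha hζ)
  rw [diskAut, norm_div, div_lt_one hden]
  have hprod : 0 < (1 - ‖a‖ ^ 2) * (1 - ‖ζ‖ ^ 2) := by
    apply mul_pos <;> nlinarith [norm_nonneg a, norm_nonneg ζ]
  rw [← sq_lt_sq₀ (norm_nonneg _) hden.le]
  linarith [sq_norm_one_add_conj_mul_sub_sq_norm_add a ζ]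

lemma mapsTo_diskAut (ha : ‖a‖ < 1) : MapsTo (diskAut a) (ball 0 1) (ball 0 1) := fun _ hζ ↦
  mem_ball_zero_iff.2 (norm_diskAut_lt_one ha (mem_ball_zero_iff.1 hζ))

lemma hasDerivAt_diskAut (h : 1 + conj a * ζ ≠ 0) :
    HasDerivAt (diskAut a) ((1 - ‖a‖ ^ 2) / (1 + conj a * ζ) ^ 2) ζ := by
  refine (((hasDerivAt_id' ζ).add_const a).div
    (((hasDerivAt_id' ζ).const_mul (conj a)).const_add 1) h).congr_deriv ?_
  rw [← Complex.conj_mul']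
  ring

lemma differentiableOn_diskAut (ha : ‖a‖ < 1) : DifferentiableOn ℂ (diskAut a) (ball 0 1) :=
  fun _ hζ ↦ (hasDerivAt_diskAut (one_add_conj_mul_ne_zero ha (mem_ball_zero_iff.1 hζ)))
    |>.differentiableAt.differentiableWithinAt

@[simp] lemma diskAut_zero : diskAut a 0 = a := by simp [diskAut]

@[simp] lemma diskAut_neg_self : diskAut (-a) a = 0 := by simp [diskAut]

lemma diskAut_diskAut_neg (ha : ‖a‖ < 1) (hζ : ‖ζ‖ < 1) : diskAut a (diskAut (-a) ζ) = ζ := by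
  have h₁ : 1 - conj a * ζ ≠ 0 := by
    simpa [sub_eq_add_neg] using one_add_conj_mul_ne_zero (a := -a) (by simpa using ha) hζ
  have h₂ : (1 : ℂ) - conj a * a ≠ 0 := by
    rw [Complex.conj_mul', sub_ne_zero]
    exact_mod_cast (by nlinarith [norm_nonneg a] : (1 : ℝ) ≠ ‖a‖ ^ 2)
  have h₃ : 1 - conj a * ζ + conj a * (ζ - a) ≠ 0 := by
    rwa [show 1 - conj a * ζ + conj a * (ζ - a) = 1 - conj a * a by ring]
  simp only [diskAut, map_neg, neg_mul, ← sub_eq_add_neg]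
  rw [div_add' _ _ _ h₁, mul_div_assoc', one_add_div h₁, div_div_div_cancel_right₀ h₁,
    div_eq_iff h₃]
  ring

lemma norm_diskAut_neg_eq_pseudoHypDist (z w : ℂ) : ‖diskAut (-w) z‖ = pseudoHypDist z w := by
  rw [diskAut, pseudoHypDist, norm_div, map_neg, neg_mul, ← sub_eq_add_neg, ← sub_eq_add_neg,
    ← Complex.norm_conj (1 - conj z * w)]
  simp [mul_comm]

end DiskAut

theorem norm_deriv_mul_le_of_mapsTo_ball {g : ℂ → ℂ} (hg : DifferentiableOn ℂ g (ball 0 1))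
    (hmaps : MapsTo g (ball 0 1) (ball 0 1)) {z : ℂ} (hz : ‖z‖ < 1) :
    ‖deriv g z‖ * (1 - ‖z‖ ^ 2) ≤ 1 - ‖g z‖ ^ 2 := by
  set a := g z
  have ha : ‖a‖ < 1 := mem_ball_zero_iff.1 (hmaps (mem_ball_zero_iff.2 hz))
  have ha' : 0 < 1 - ‖a‖ ^ 2 := by nlinarith [norm_nonneg a]
  -- `diskAut (-a) ∘ g ∘ diskAut z` fixes `0`, so the Schwarz lemma bounds its derivative there.
  have hd : HasDerivAt (diskAut (-a) ∘ g ∘ diskAut z)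
      ((1 - ‖a‖ ^ 2) / (1 - ‖a‖ ^ 2) ^ 2 * (deriv g z * (1 - ‖z‖ ^ 2))) 0 := by
    have hgz : HasDerivAt g (deriv g z) (diskAut z 0) := by
      rw [diskAut_zero]
      exact (hg.differentiableAt (isOpen_ball.mem_nhds (mem_ball_zero_iff.2 hz))).hasDerivAt
    have hψ : HasDerivAt (diskAut (-a)) ((1 - ‖a‖ ^ 2) / (1 - ‖a‖ ^ 2) ^ 2) (g (diskAut z 0)) := by
      convert hasDerivAt_diskAut (one_add_conj_mul_ne_zero (a := -a) (by simpa using ha) ha)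
        using 2 <;> simp [a, Complex.conj_mul', sub_eq_add_neg]
    simpa using hψ.comp 0 (hgz.comp 0 (hasDerivAt_diskAut (by simp)))
  have hschwarz : ‖deriv (diskAut (-a) ∘ g ∘ diskAut z) 0‖ ≤ 1 := by
    refine Complex.norm_deriv_le_one_of_mapsTo_ball ?_ ?_ one_pos
    · exact (differentiableOn_diskAut (by simpa using ha)).comp
        (hg.comp (differentiableOn_diskAut hz) (mapsTo_diskAut hz))
        (hmaps.comp (mapsTo_diskAut hz))
    · simpa [a] using ((mapsTo_diskAut (by simpa using ha)).comp
        (hmaps.comp (mapsTo_diskAut hz))).mono_right ball_subset_closedBall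
  have hcast : ∀ x : ℂ, (1 : ℂ) - ‖x‖ ^ 2 = ((1 - ‖x‖ ^ 2 : ℝ) : ℂ) := fun x ↦ by push_cast; rfl
  rw [hd.deriv, hcast, hcast, ← Complex.ofReal_pow, ← Complex.ofReal_div, norm_mul, norm_mul,
    Complex.norm_real, Complex.norm_real, Real.norm_of_nonneg (by positivity),
    Real.norm_of_nonneg (by nlinarith [norm_nonneg z])] at hschwarz
  calc ‖deriv g z‖ * (1 - ‖z‖ ^ 2)
      = (1 - ‖a‖ ^ 2) * ((1 - ‖a‖ ^ 2) / (1 - ‖a‖ ^ 2) ^ 2 * (‖deriv g z‖ * (1 - ‖z‖ ^ 2))) := by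
        field_simp
    _ ≤ 1 - ‖a‖ ^ 2 := mul_le_of_le_one_right ha'.le hschwarz

lemma sq_norm_add_one_sub_sq_norm_sub_one (w : ℂ) : ‖w + 1‖ ^ 2 - ‖w - 1‖ ^ 2 = 4 * w.re := by
  simp only [Complex.sq_norm, Complex.normSq_apply, Complex.add_re, Complex.add_im,
    Complex.sub_re, Complex.sub_im, Complex.one_re, Complex.one_im]
  ring

theorem norm_deriv_mul_le_two_mul_re {G : ℂ → ℂ} (hG : DifferentiableOn ℂ G (ball 0 1))
    (hpos : ∀ ζ ∈ ball (0 : ℂ) 1, 0 < (G ζ).re) {z : ℂ} (hz : ‖z‖ < 1) :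
    ‖deriv G z‖ * (1 - ‖z‖ ^ 2) ≤ 2 * (G z).re := by
  have hne : ∀ ζ ∈ ball (0 : ℂ) 1, G ζ + 1 ≠ 0 := fun ζ hζ h ↦ by
    have := hpos ζ hζ
    rw [eq_neg_of_add_eq_zero_left h] at this
    norm_num at this
  -- the Cayley transform `w ↦ (w - 1) / (w + 1)` maps the right half-plane into the disk
  set g := fun ζ ↦ (G ζ - 1) / (G ζ + 1)
  have hmaps : MapsTo g (ball 0 1) (ball 0 1) := fun ζ hζ ↦ by
    have hN := norm_pos_iff.2 (hne ζ hζ)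
    rw [mem_ball_zero_iff, norm_div, div_lt_one hN, ← sq_lt_sq₀ (norm_nonneg _) hN.le]
    linarith [sq_norm_add_one_sub_sq_norm_sub_one (G ζ), hpos ζ hζ]
  have hgd : ∀ ζ ∈ ball (0 : ℂ) 1, HasDerivAt g (2 * deriv G ζ / (G ζ + 1) ^ 2) ζ := by
    intro ζ hζ
    have hGd := (hG.differentiableAt (isOpen_ball.mem_nhds hζ)).hasDerivAt
    exact ((hGd.sub_const 1).div (hGd.add_const 1) (hne ζ hζ)).congr_deriv (by ring)
  have hz' : z ∈ ball (0 : ℂ) 1 := mem_ball_zero_iff.2 hz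
  have hN := norm_pos_iff.2 (hne z hz')
  have hpick := norm_deriv_mul_le_of_mapsTo_ball
    (fun ζ hζ ↦ (hgd ζ hζ).differentiableAt.differentiableWithinAt) hmaps hz
  have hrhs : 1 - ‖g z‖ ^ 2 = 4 * (G z).re / ‖G z + 1‖ ^ 2 := by
    rw [norm_div, div_pow, eq_div_iff (by positivity), sub_mul,
      div_mul_cancel₀ _ (by positivity), ← sq_norm_add_one_sub_sq_norm_sub_one]
    ring
  rw [(hgd z hz').deriv, hrhs, norm_div, norm_mul, norm_pow, Complex.norm_two, div_mul_eq_mul_div,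
    div_le_div_iff_of_pos_right (by positivity)] at hpick
  linarith

theorem norm_deriv_mul_le_four_div_pi_mul_cos {F : ℂ → ℂ} (hF : DifferentiableOn ℂ F (ball 0 1))
    (hRe : ∀ ζ ∈ ball (0 : ℂ) 1, |(F ζ).re| < 1) {z : ℂ} (hz : ‖z‖ < 1) :
    ‖deriv F z‖ * (1 - ‖z‖ ^ 2) ≤ 4 / π * cos (π / 2 * (F z).re) := by
  -- `G = exp (i π F / 2)` takes values in the right half-plane
  set k : ℂ := π / 2 * Complex.I
  set G := fun ζ ↦ Complex.exp (k * F ζ)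
  have hGre : ∀ ζ, (G ζ).re = ‖G ζ‖ * cos (π / 2 * (F ζ).re) := fun ζ ↦ by
    simp [G, k, Complex.exp_re, Complex.norm_exp]
  have hcos : ∀ ζ ∈ ball (0 : ℂ) 1, 0 < cos (π / 2 * (F ζ).re) := fun ζ hζ ↦ by
    obtain ⟨h₁, h₂⟩ := abs_lt.1 (hRe ζ hζ)
    apply cos_pos_of_mem_Ioo
    constructor <;> nlinarith [pi_pos]
  have hGd : ∀ ζ ∈ ball (0 : ℂ) 1, HasDerivAt G (G ζ * (k * deriv F ζ)) ζ := fun ζ hζ ↦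
    ((hF.differentiableAt (isOpen_ball.mem_nhds hζ)).hasDerivAt.const_mul k).cexp
  have hG : DifferentiableOn ℂ G (ball 0 1) := fun ζ hζ ↦
    (hGd ζ hζ).differentiableAt.differentiableWithinAt
  have hGpos : ∀ ζ ∈ ball (0 : ℂ) 1, 0 < (G ζ).re := fun ζ hζ ↦ by
    rw [hGre]
    exact mul_pos (norm_pos_iff.2 (Complex.exp_ne_zero _)) (hcos ζ hζ)
  have hk : ‖k‖ = π / 2 := by simp [k, abs_of_pos pi_pos]
  have hhalf := norm_deriv_mul_le_two_mul_re hG hGpos hz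
  rw [(hGd z (mem_ball_zero_iff.2 hz)).deriv, hGre, norm_mul, norm_mul, hk, mul_assoc, mul_assoc,
    mul_left_comm 2, mul_le_mul_iff_right₀ (norm_pos_iff.2 (Complex.exp_ne_zero _))] at hhalf
  rw [div_mul_eq_mul_div, le_div_iff₀ pi_pos]
  linarith

lemma cos_pi_div_two_mul_le_one_sub_sq {x : ℝ} (hx : |x| ≤ 1) : cos (π / 2 * x) ≤ 1 - x ^ 2 := by
  wlog h₀ : 0 ≤ x generalizing x
  · simpa [mul_neg] using this (x := -x) (by rwa [abs_neg]) (by linarith)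
  have h₁ : x ≤ 1 := (le_abs_self x).trans hx
  -- concavity of `sin` on `[0, π / 4]`: the chord lies below the graph
  have hsin : x * sin (π / 4) ≤ sin (x * (π / 4)) := by
    have := strictConcaveOn_sin_Icc.concaveOn.2 (x := 0) (y := π / 4)
      ⟨le_rfl, pi_pos.le⟩ ⟨by positivity, by linarith [pi_pos]⟩ (sub_nonneg.2 h₁) h₀ (by ring)
    simpa [smul_eq_mul] using this
  rw [sin_pi_div_four] at hsin
  have hsq : x ^ 2 / 2 ≤ sin (x * (π / 4)) ^ 2 := by
    have h := pow_le_pow_left₀ (by positivity) hsin 2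
    rw [mul_pow, div_pow, sq_sqrt zero_le_two] at h
    linarith
  rw [show π / 2 * x = 2 * (x * (π / 4)) by ring, cos_two_mul, cos_sq']
  linarith

theorem norm_deriv_mul_le_four_div_pi_mul_one_sub_sq {F : ℂ → ℂ}
    (hF : DifferentiableOn ℂ F (ball 0 1)) (hRe : ∀ ζ ∈ ball (0 : ℂ) 1, |(F ζ).re| < 1) {z : ℂ}
    (hz : ‖z‖ < 1) : ‖deriv F z‖ * (1 - ‖z‖ ^ 2) ≤ 4 / π * (1 - (F z).re ^ 2) :=
  (norm_deriv_mul_le_four_div_pi_mul_cos hF hRe hz).trans <| by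
    gcongr
    exact cos_pi_div_two_mul_le_one_sub_sq (hRe z (mem_ball_zero_iff.2 hz)).le

-- For `|x| < 1` this is `2 * Real.artanh x`, the signed distance from `0` for the density
-- `2 / (1 - t ^ 2)` on `(-1, 1)`.
noncomputable def twoArtanh (x : ℝ) : ℝ := log ((1 + x) / (1 - x))

@[simp] lemma twoArtanh_zero : twoArtanh 0 = 0 := by simp [twoArtanh]

lemma hasDerivAt_twoArtanh {x : ℝ} (hx : |x| < 1) : HasDerivAt twoArtanh (2 / (1 - x ^ 2)) x := by
  obtain ⟨h₁, h₂⟩ := abs_lt.1 hx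
  have hsub : 1 - x ≠ 0 := by linarith
  refine ((((hasDerivAt_id' x).const_add 1).div ((hasDerivAt_id' x).const_sub 1) hsub).log
    (div_ne_zero (by linarith) hsub)).congr_deriv ?_
  have hadd : 1 + x ≠ 0 := by linarith
  have hsq : 1 - x ^ 2 ≠ 0 := by nlinarith
  simp only [Pi.div_apply]
  field_simp
  ring

theorem abs_twoArtanh_re_sub_le {F : ℂ → ℂ} (hF : DifferentiableOn ℂ F (ball 0 1))
    (hRe : ∀ ζ ∈ ball (0 : ℂ) 1, |(F ζ).re| < 1) {r : ℝ} (hr₀ : 0 ≤ r) (hr₁ : r < 1) :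
    |twoArtanh (F r).re - twoArtanh (F 0).re| ≤ 4 / π * twoArtanh r := by
  have habs : ∀ t ∈ Icc 0 r, |t| < 1 := fun t ht ↦ abs_lt.2 ⟨by linarith [ht.1], by linarith [ht.2]⟩
  have hball : ∀ t ∈ Icc 0 r, (t : ℂ) ∈ ball (0 : ℂ) 1 := fun t ht ↦ by
    simpa using habs t ht
  have hf : ∀ t ∈ Icc 0 r, HasDerivAt (fun s : ℝ ↦ twoArtanh (F s).re - twoArtanh (F 0).re)
      (2 / (1 - (F t).re ^ 2) * (deriv F t).re) t := fun t ht ↦ by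
    have hFt := (hF.differentiableAt (isOpen_ball.mem_nhds (hball t ht))).hasDerivAt
    exact ((hasDerivAt_twoArtanh (hRe _ (hball t ht))).comp t hFt.real_of_complex).sub_const _
  have hB : ∀ t ∈ Icc 0 r, HasDerivAt (fun s ↦ 4 / π * twoArtanh s) (4 / π * (2 / (1 - t ^ 2))) t :=
    fun t ht ↦ (hasDerivAt_twoArtanh (habs t ht)).const_mul _
  have hbound : ∀ t ∈ Icc 0 r,
      ‖2 / (1 - (F t).re ^ 2) * (deriv F t).re‖ ≤ 4 / π * (2 / (1 - t ^ 2)) := by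
    intro t ht
    have hT : 0 < 1 - t ^ 2 := by nlinarith [habs t ht, abs_nonneg t, sq_abs t]
    have hU : 0 < 1 - (F t).re ^ 2 := by
      nlinarith [hRe _ (hball t ht), abs_nonneg (F t).re, sq_abs (F t).re]
    have hpick : ‖deriv F t‖ ≤ 4 / π * (1 - (F t).re ^ 2) / (1 - t ^ 2) := by
      rw [le_div_iff₀ hT]
      simpa [sq_abs] using
        norm_deriv_mul_le_four_div_pi_mul_one_sub_sq hF hRe (mem_ball_zero_iff.1 (hball t ht))
    calc ‖2 / (1 - (F t).re ^ 2) * (deriv F t).re‖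
        = 2 / (1 - (F t).re ^ 2) * |(deriv F t).re| := by
          rw [Real.norm_eq_abs, abs_mul, abs_of_pos (by positivity)]
      _ ≤ 2 / (1 - (F t).re ^ 2) * (4 / π * (1 - (F t).re ^ 2) / (1 - t ^ 2)) := by
          gcongr
          exact (Complex.abs_re_le_norm _).trans hpick
      _ = 4 / π * (2 / (1 - t ^ 2)) := by
          field_simp
  have := image_norm_le_of_norm_deriv_right_le_deriv_boundary'
    (fun t ht ↦ (hf t ht).continuousAt.continuousWithinAt)
    (fun t ht ↦ (hf t (Ico_subset_Icc_self ht)).hasDerivWithinAt) (by simp)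
    (fun t ht ↦ (hB t ht).continuousAt.continuousWithinAt)
    (fun t ht ↦ (hB t (Ico_subset_Icc_self ht)).hasDerivWithinAt)
    (fun t ht ↦ hbound t (Ico_subset_Icc_self ht)) (right_mem_Icc.2 hr₀)
  simpa using this

lemma pseudoHypDist_lt_one {z w : ℂ} (hz : ‖z‖ < 1) (hw : ‖w‖ < 1) : pseudoHypDist z w < 1 :=
  norm_diskAut_neg_eq_pseudoHypDist z w ▸ norm_diskAut_lt_one (by simpa using hw) hz

lemma exists_selfMap_ball_zero_pseudoHypDist {z w : ℂ} (hz : ‖z‖ < 1) (hw : ‖w‖ < 1) :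
    ∃ T : ℂ → ℂ, DifferentiableOn ℂ T (ball 0 1) ∧ MapsTo T (ball 0 1) (ball 0 1) ∧
      T 0 = w ∧ T (pseudoHypDist z w) = z := by
  -- rotate `c = diskAut (-w) z` onto `‖c‖`; when `z = w` the junk value `u = 0` is harmless
  set c := diskAut (-w) z
  set u : ℂ := c / ‖c‖
  have hu : ‖u‖ ≤ 1 := by
    rw [norm_div, Complex.norm_real, norm_norm]
    exact div_self_le_one _
  have huc : u * ‖c‖ = c := by
    rcases eq_or_ne c 0 with hc | hc
    · simp [hc]
    · exact div_mul_cancel₀ _ (by simpa using hc)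
  have hrot : MapsTo (u * ·) (ball 0 1) (ball 0 1) := fun ζ hζ ↦ by
    rw [mem_ball_zero_iff] at hζ ⊢
    rw [norm_mul]
    exact (mul_le_of_le_one_left (norm_nonneg ζ) hu).trans_lt hζ
  refine ⟨diskAut w ∘ (u * ·),
    (differentiableOn_diskAut hw).comp ((differentiableOn_const u).mul differentiableOn_id) hrot,
    (mapsTo_diskAut hw).comp hrot, by simp, ?_⟩
  rw [← norm_diskAut_neg_eq_pseudoHypDist, Function.comp_apply, huc, diskAut_diskAut_neg hw hz]

/-- Kalaj–Vuorinen: If f is holomorphic on the unit disk with |Re f| < 1,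
then `|log((1+Re f(z))/(1−Re f(z))) − log((1+Re f(w))/(1−Re f(w)))| ≤ (4/π)·σ(z,w)`. -/
theorem re_holomorphic_kalaj_vuorinen (f : ℂ → ℂ)
    (hf : ∀ z ∈ Metric.ball (0 : ℂ) 1, DifferentiableAt ℂ f z)
    (hRe : ∀ z ∈ Metric.ball (0 : ℂ) 1, |(f z).re| < 1)
    (z w : ℂ) (hz : z ∈ Metric.ball (0 : ℂ) 1) (hw : w ∈ Metric.ball (0 : ℂ) 1) :
    |Real.log ((1 + (f z).re) / (1 - (f z).re)) -
        Real.log ((1 + (f w).re) / (1 - (f w).re))| ≤ (4 / π) * hypDist z w := by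
  rw [mem_ball_zero_iff] at hz hw
  obtain ⟨T, hT, hTmaps, hT0, hTρ⟩ := exists_selfMap_ball_zero_pseudoHypDist hz hw
  have hF : DifferentiableOn ℂ (f ∘ T) (ball 0 1) := fun ζ hζ ↦
    ((hf _ (hTmaps hζ)).comp ζ ((hT ζ hζ).differentiableAt (isOpen_ball.mem_nhds hζ)))
      |>.differentiableWithinAt
  have key := abs_twoArtanh_re_sub_le hF (fun ζ hζ ↦ hRe _ (hTmaps hζ))
    (norm_diskAut_neg_eq_pseudoHypDist z w ▸ norm_nonneg _) (pseudoHypDist_lt_one hz hw)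
  rwa [Function.comp_apply, Function.comp_apply, hT0, hTρ] at key
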